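/- Let (M, d) be a complete metric space, f : M → [0,∞) a continuous function, j > 0, and X ∈ M with f(X) > j. Suppose the closed ball of radius 1/4 around X is complete. Then there exists Y ∈ M with d(X,Y) ≤ j/(5 f(X)) ≤ 1/4, Q := f(Y) ≥ f(X) > j, and f(Z) ≤ 2Q for all Z with d(Y, Z) ≤ j/(10 Q). -/

import Mathlib

/-- Point selection lemma: in a complete metric space, if `f ≥ 0` is continuous
and `f(X) > j > 0`, then there is a point `Y` with `d(X,Y) ≤ j/(5 f(X))`,
`f(Y) ≥ f(X)`, and `f(Z) ≤ 2 f(Y)` for all `Z` with `d(Y,Z) ≤ j/(10 f(Y))`. -/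
theorem stmt_16 {M : Type*} [MetricSpace M] [CompleteSpace M]
    (f : M → ℝ) (hf : Continuous f) (hf0 : ∀ z, 0 ≤ f z)
    (j : ℝ) (hj : 0 < j) (X : M) (hX : j < f X) :
    ∃ Y : M, dist X Y ≤ j / (5 * f X) ∧ f X ≤ f Y ∧
      ∀ Z : M, dist Y Z ≤ j / (10 * f Y) → f Z ≤ 2 * f Y := by
  by_contra hcon
  push_neg at hcon
  have hfX : 0 < f X := hj.trans hX
  set D := j / (10 * f X) with hD
  have hDpos : 0 < D := div_pos hj (by positivity)
  classical
  -- the iteration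
  let next : M → M := fun y =>
    if h : dist X y ≤ j / (5 * f X) ∧ f X ≤ f y then Classical.choose (hcon y h.1 h.2) else y
  let u : ℕ → M := fun n => Nat.rec X (fun _ y => next y) n
  have hu0 : u 0 = X := rfl
  have hus : ∀ n, u (n + 1) = next (u n) := fun n => rfl
  have h2D : j / (5 * f X) = 2 * D := by rw [hD]; ring
  -- key step lemma
  have step : ∀ n (y : M), dist X y ≤ D * (2 - 2 * (1/2)^n) → 2 ^ n * f X ≤ f y →
      dist y (next y) ≤ D * (1/2)^n ∧ 2 ^ (n+1) * f X ≤ f (next y) := by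
    intro n y hdy hfy
    have h1n : (1:ℝ) ≤ 2 ^ n := one_le_pow₀ (by norm_num)
    have hfXy : f X ≤ f y := by nlinarith
    have hd1 : dist X y ≤ j / (5 * f X) := by
      rw [h2D]
      have : D * (2 - 2 * (1/2)^n) ≤ 2 * D := by
        have : (0:ℝ) < (1/2)^n := by positivity
        nlinarith
      linarith
    have hcond : dist X y ≤ j / (5 * f X) ∧ f X ≤ f y := ⟨hd1, hfXy⟩
    have hnext : next y = Classical.choose (hcon y hcond.1 hcond.2) := dif_pos hcond
    obtain ⟨hdz, hfz⟩ := Classical.choose_spec (hcon y hcond.1 hcond.2)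
    rw [hnext]
    constructor
    · refine hdz.trans ?_
      have hfy' : 0 < f y := lt_of_lt_of_le (by positivity) hfy
      have h2n : (0:ℝ) < 2 ^ n := by positivity
      rw [div_le_iff₀ (by positivity)]
      have heq : D * (1/2)^n * (10 * (2 ^ n * f X)) = j := by
        rw [hD]; field_simp; rw [← mul_pow]; norm_num
      have h := mul_le_mul_of_nonneg_left hfy (show (0:ℝ) ≤ D * (1/2)^n * 10 by positivity)
      calc j = D * (1/2)^n * (10 * (2 ^ n * f X)) := heq.symm
        _ = D * (1/2)^n * 10 * (2 ^ n * f X) := by ring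
        _ ≤ D * (1/2)^n * 10 * f y := h
        _ = D * (1/2)^n * (10 * f y) := by ring
    · have : 2 ^ (n+1) * f X = 2 * (2 ^ n * f X) := by ring
      nlinarith
  -- the invariant
  have inv : ∀ n, dist X (u n) ≤ D * (2 - 2 * (1/2)^n) ∧ 2 ^ n * f X ≤ f (u n) := by
    intro n
    induction n with
    | zero => simp [hu0]
    | succ n ih =>
      obtain ⟨hd, hfn⟩ := ih
      obtain ⟨hstep, hfn'⟩ := step n (u n) hd hfn
      refine ⟨?_, by rw [hus]; exact hfn'⟩
      rw [hus]
      calc dist X (next (u n)) ≤ dist X (u n) + dist (u n) (next (u n)) := dist_triangle _ _ _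
        _ ≤ D * (2 - 2 * (1/2)^n) + D * (1/2)^n := add_le_add hd hstep
        _ = D * (2 - 2 * (1/2)^(n+1)) := by ring
  have hdstep : ∀ n, dist (u n) (u (n+1)) ≤ D * (1/2)^n := by
    intro n
    obtain ⟨hd, hfn⟩ := inv n
    rw [hus]
    exact (step n (u n) hd hfn).1
  -- Cauchy and limit
  have hcauchy : CauchySeq u := cauchySeq_of_le_geometric (1/2) D (by norm_num) hdstep
  obtain ⟨L, hL⟩ := cauchySeq_tendsto_of_complete hcauchy
  have hfL : Filter.Tendsto (fun n => f (u n)) Filter.atTop (nhds (f L)) :=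
    ((hf.tendsto L).comp hL)
  have hdiv : Filter.Tendsto (fun n => f (u n)) Filter.atTop Filter.atTop := by
    apply Filter.tendsto_atTop_mono (fun n => (inv n).2)
    exact (tendsto_pow_atTop_atTop_of_one_lt (by norm_num : (1:ℝ) < 2)).atTop_mul_const hfX
  exact not_tendsto_atTop_of_tendsto_nhds hfL hdiv
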